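/- Let N₀ ≥ 0 and let A ⊆ (0,1] be a nonempty union of level-N₀ dyadic intervals. If B ⊆ A is a Borel set such that g⁻¹(B) = B for every dyadic permutation g ∈ Perm^dyad_A (i.e. every dyadic permutation that is the identity on A^c), then λ(B) = 0 or λ(A \ B) = 0, where λ denotes Lebesgue measure. -/

import Mathlib

open MeasureTheory

/-- The `k`-th dyadic interval of level `d` (1-indexed): `I_k^d = ((k-1)/2^d, k/2^d]`. -/
def dyadI (d k : ℕ) : Set ℝ := Set.Ioc (((k : ℝ) - 1) / 2 ^ d) ((k : ℝ) / 2 ^ d)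

/-- `g` is a dyadic permutation of `(0,1]` (extended to `ℝ` by the identity outside `(0,1]`):
for some `d ≥ 0` and some permutation `π` of the level-`d` dyadic intervals (indexed here by
`Fin (2^d)`, i.e. `0`-based), `g` shifts `I_{k+1}^d` onto `I_{π(k)+1}^d`. -/
def IsDyadicPerm (g : ℝ → ℝ) : Prop :=
  (∀ t ∉ Set.Ioc (0 : ℝ) 1, g t = t) ∧
  ∃ d : ℕ, ∃ π : Equiv.Perm (Fin (2 ^ d)),
    ∀ k : Fin (2 ^ d), ∀ t ∈ dyadI d ((k : ℕ) + 1),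
      g t = (((π k : ℕ) : ℝ) + 1) / 2 ^ d - (((k : ℕ) + 1 : ℝ) / 2 ^ d - t)

/-!
Swapping two level-`d` subintervals of `A` (`d ≥ N₀`) is a dyadic permutation fixing `Aᶜ`,
so by translation invariance of `λ` all these subintervals meet `B` in the same measure: the
fraction `c = λ B / λ A` of their length. At a density point `x` of `B`, the closed ball of
radius `2⁻ᵈ` around `x` contains the level-`d` interval of `x`, hence `B` fills at most
`(1 + c) / 2` of the ball. Letting `d → ∞` gives `c ≥ 1`, i.e. `λ (A \ B) = 0`.
-/

open Set Filter Topology Metric Function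
open scoped ENNReal

lemma mem_dyadI_iff {d k : ℕ} {t : ℝ} : t ∈ dyadI d k ↔ ⌈t * 2 ^ d⌉ = k := by
  have h2 : (0 : ℝ) < 2 ^ d := by positivity
  rw [dyadI, mem_Ioc, Int.ceil_eq_iff, div_lt_iff₀ h2, le_div_iff₀ h2]
  push_cast
  rfl

lemma eq_of_mem_dyadI {d j k : ℕ} {t : ℝ} (hj : t ∈ dyadI d j) (hk : t ∈ dyadI d k) :
    j = k := by
  rw [mem_dyadI_iff] at hj hk
  exact_mod_cast hj.symm.trans hk

lemma pairwise_disjoint_dyadI (d : ℕ) : Pairwise (Disjoint on (dyadI d)) :=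
  fun _ _ hjk => disjoint_left.2 fun _ hj hk => hjk (eq_of_mem_dyadI hj hk)

lemma dyadI_succ (d k : ℕ) :
    dyadI d (k + 1) = Ioc ((k : ℝ) / 2 ^ d) (((k : ℝ) + 1) / 2 ^ d) := by
  simp only [dyadI, Nat.cast_add, Nat.cast_one, add_sub_cancel_right]

lemma dyadI_subset_Ioc {d k : ℕ} (hk : k < 2 ^ d) : dyadI d (k + 1) ⊆ Ioc 0 1 := by
  have hk' : (k : ℝ) + 1 ≤ 2 ^ d := by exact_mod_cast hk
  rw [dyadI_succ]
  exact Ioc_subset_Ioc (by positivity) ((div_le_one (by positivity)).2 hk')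

lemma exists_mem_dyadI {d : ℕ} {t : ℝ} (ht : t ∈ Ioc (0 : ℝ) 1) :
    ∃ k : Fin (2 ^ d), t ∈ dyadI d (k + 1) := by
  have h2 : (0 : ℝ) < 2 ^ d := by positivity
  have hpos : 1 ≤ ⌈t * 2 ^ d⌉ := by
    rw [Int.le_ceil_iff]; push_cast; nlinarith [ht.1]
  have hle : ⌈t * 2 ^ d⌉ ≤ 2 ^ d := by
    apply Int.ceil_le.2; push_cast; nlinarith [ht.2]
  have hcast : ((2 ^ d : ℕ) : ℤ) = 2 ^ d := by push_cast; rfl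
  refine ⟨⟨(⌈t * 2 ^ d⌉).toNat - 1, by omega⟩, ?_⟩
  rw [mem_dyadI_iff]
  push_cast
  omega

lemma dyadI_subset_dyadI_div {N d : ℕ} (hNd : N ≤ d) (k : ℕ) :
    dyadI d (k + 1) ⊆ dyadI N (k / 2 ^ (d - N) + 1) := by
  obtain ⟨e, rfl⟩ := Nat.exists_eq_add_of_le hNd
  rw [Nat.add_sub_cancel_left, dyadI_succ, dyadI_succ]
  set q := k / 2 ^ e
  have hlow : q * 2 ^ e ≤ k := Nat.div_mul_le_self k _
  have hup : k + 1 ≤ (q + 1) * 2 ^ e := by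
    rw [Nat.mul_comm]; exact Nat.lt_mul_div_succ k (by positivity)
  have hscale (n : ℝ) : n / 2 ^ N = n * 2 ^ e / 2 ^ (N + e) := by
    rw [pow_add]; field_simp
  refine Ioc_subset_Ioc ?_ ?_
  · rw [hscale]; gcongr; exact_mod_cast hlow
  · rw [hscale]; gcongr; exact_mod_cast hup

lemma dyadI_subset_of_mem {N d k q : ℕ} (hNd : N ≤ d) {t : ℝ} (ht : t ∈ dyadI d (k + 1))
    (htq : t ∈ dyadI N q) : dyadI d (k + 1) ⊆ dyadI N q := by
  have hsub := dyadI_subset_dyadI_div hNd k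
  rwa [eq_of_mem_dyadI (hsub ht) htq] at hsub

lemma measurableSet_dyadI (d k : ℕ) : MeasurableSet (dyadI d k) := measurableSet_Ioc

lemma volume_dyadI (d k : ℕ) : volume (dyadI d k) = ENNReal.ofReal (2 ^ d)⁻¹ := by
  rw [dyadI, Real.volume_Ioc]
  congr 1
  field_simp
  ring

lemma preimage_add_dyadI (d j k : ℕ) :
    (· + ((j : ℝ) - k) / 2 ^ d) ⁻¹' dyadI d j = dyadI d k := by
  rw [dyadI, dyadI, preimage_add_const_Ioc]
  congr 1 <;> field_simp <;> ring

lemma dyadI_subset_closedBall {d k : ℕ} {x : ℝ} (hx : x ∈ dyadI d k) :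
    dyadI d k ⊆ closedBall x (2 ^ d)⁻¹ := by
  intro t ht
  have hlen : (k : ℝ) / 2 ^ d - ((k : ℝ) - 1) / 2 ^ d = (2 ^ d)⁻¹ := by field_simp; ring
  rw [mem_closedBall, ← hlen]
  exact Real.dist_le_of_mem_Icc (Ioc_subset_Icc_self ht) (Ioc_subset_Icc_self hx)

open Classical in
noncomputable def dyadSwap (d j k : ℕ) (t : ℝ) : ℝ :=
  if t ∈ dyadI d j then t + ((k : ℝ) - j) / 2 ^ d
  else if t ∈ dyadI d k then t + ((j : ℝ) - k) / 2 ^ d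
  else t

lemma dyadSwap_of_mem_left {d j k : ℕ} {t : ℝ} (ht : t ∈ dyadI d j) :
    dyadSwap d j k t = t + ((k : ℝ) - j) / 2 ^ d :=
  if_pos ht

lemma dyadSwap_of_mem_right {d j k : ℕ} {t : ℝ} (ht : t ∈ dyadI d k) :
    dyadSwap d j k t = t + ((j : ℝ) - k) / 2 ^ d := by
  by_cases htj : t ∈ dyadI d j
  · obtain rfl := eq_of_mem_dyadI htj ht
    exact dyadSwap_of_mem_left htj
  · rw [dyadSwap, if_neg htj, if_pos ht]

lemma dyadSwap_of_not_mem {d j k : ℕ} {t : ℝ} (htj : t ∉ dyadI d j) (htk : t ∉ dyadI d k) :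
    dyadSwap d j k t = t := by
  rw [dyadSwap, if_neg htj, if_neg htk]

lemma isDyadicPerm_dyadSwap {d : ℕ} (j k : Fin (2 ^ d)) :
    IsDyadicPerm (dyadSwap d (j + 1) (k + 1)) := by
  refine ⟨fun t ht => dyadSwap_of_not_mem (fun h => ht (dyadI_subset_Ioc j.isLt h))
    (fun h => ht (dyadI_subset_Ioc k.isLt h)), d, Equiv.swap j k, fun i t ht => ?_⟩
  by_cases htj : t ∈ dyadI d (j + 1)
  · obtain rfl : i = j := Fin.ext (Nat.add_right_cancel (eq_of_mem_dyadI ht htj))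
    rw [dyadSwap_of_mem_left htj, Equiv.swap_apply_left]
    push_cast; ring
  by_cases htk : t ∈ dyadI d (k + 1)
  · obtain rfl : i = k := Fin.ext (Nat.add_right_cancel (eq_of_mem_dyadI ht htk))
    rw [dyadSwap_of_mem_right htk, Equiv.swap_apply_right]
    push_cast; ring
  · have hij : i ≠ j := by rintro rfl; exact htj ht
    have hik : i ≠ k := by rintro rfl; exact htk ht
    rw [dyadSwap_of_not_mem htj htk, Equiv.swap_apply_of_ne_of_ne hij hik]
    ring

lemma volume_inter_dyadI_eq_of_preimage_dyadSwap {d j k : ℕ} {B : Set ℝ}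
    (hB : dyadSwap d j k ⁻¹' B = B) : volume (B ∩ dyadI d k) = volume (B ∩ dyadI d j) := by
  have hshift : B ∩ dyadI d k = (· + ((j : ℝ) - k) / 2 ^ d) ⁻¹' (B ∩ dyadI d j) := by
    rw [preimage_inter, preimage_add_dyadI]
    ext t
    simp only [mem_inter_iff, mem_preimage, and_congr_left_iff]
    intro ht
    rw [← dyadSwap_of_mem_right ht, ← mem_preimage, hB]
  rw [hshift, measure_preimage_add_right]

lemma biUnion_dyadI_subset_Ioc {N : ℕ} (s : Finset (Fin (2 ^ N))) :
    ⋃ k ∈ s, dyadI N (k + 1) ⊆ Ioc 0 1 :=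
  iUnion₂_subset fun k _ => dyadI_subset_Ioc k.isLt

lemma dyadI_subset_biUnion {d : ℕ} {T : Finset (Fin (2 ^ d))} {k : Fin (2 ^ d)} (hk : k ∈ T) :
    dyadI d (k + 1) ⊆ ⋃ j ∈ T, dyadI d (j + 1) :=
  Finset.subset_set_biUnion_of_mem (f := fun j : Fin (2 ^ d) => dyadI d (j + 1)) hk

lemma exists_finset_eq_biUnion_dyadI {N d : ℕ} (hNd : N ≤ d) {s : Finset (Fin (2 ^ N))}
    {A : Set ℝ} (hA : A = ⋃ k ∈ s, dyadI N (k + 1)) :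
    ∃ T : Finset (Fin (2 ^ d)), A = ⋃ k ∈ T, dyadI d (k + 1) := by
  classical
  refine ⟨Finset.univ.filter fun k : Fin (2 ^ d) => dyadI d (k + 1) ⊆ A,
    Subset.antisymm (fun t ht => ?_)
    (iUnion₂_subset fun k hk => (Finset.mem_filter.1 hk).2)⟩
  obtain ⟨q, hq, htq⟩ := mem_iUnion₂.1 (hA ▸ ht)
  obtain ⟨k, hk⟩ := exists_mem_dyadI (d := d) (dyadI_subset_Ioc q.isLt htq)
  refine mem_iUnion₂.2 ⟨k, Finset.mem_filter.2 ⟨Finset.mem_univ _, ?_⟩, hk⟩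
  rw [hA]
  exact (dyadI_subset_of_mem hNd hk htq).trans (dyadI_subset_biUnion hq)

lemma mul_measure_biUnion_eq {α ι : Type*} [MeasurableSpace α] {μ : Measure α} {T : Finset ι}
    {I : ι → Set α} (hdisj : (T : Set ι).PairwiseDisjoint I)
    (hI : ∀ k ∈ T, MeasurableSet (I k))
    {B : Set α} (hB : MeasurableSet B) (hBT : B ⊆ ⋃ k ∈ T, I k) {v m : ℝ≥0∞}
    (hv : ∀ k ∈ T, μ (I k) = v) (hm : ∀ k ∈ T, μ (B ∩ I k) = m) :
    m * μ (⋃ k ∈ T, I k) = μ B * v := by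
  have hBunion : B = ⋃ k ∈ T, B ∩ I k := by rw [← inter_iUnion₂, inter_eq_left.2 hBT]
  rw [measure_biUnion_finset hdisj hI, hBunion,
    measure_biUnion_finset (hdisj.mono fun k => inter_subset_right)
      (fun k hk => hB.inter (hI k hk)),
    Finset.sum_congr rfl hv, Finset.sum_congr rfl hm]
  simp only [Finset.sum_const, nsmul_eq_mul]
  ring

lemma volume_inter_dyadI_mul_volume {d : ℕ} {T : Finset (Fin (2 ^ d))} {A B : Set ℝ}
    (hA : A = ⋃ k ∈ T, dyadI d (k + 1)) (hBA : B ⊆ A) (hB : MeasurableSet B)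
    (hinv : ∀ g : ℝ → ℝ, IsDyadicPerm g → (∀ t ∉ A, g t = t) → g ⁻¹' B = B)
    {k : Fin (2 ^ d)} (hk : k ∈ T) :
    volume (B ∩ dyadI d (k + 1)) * volume A = volume B * ENNReal.ofReal (2 ^ d)⁻¹ := by
  have hsubA {j : Fin (2 ^ d)} (hj : j ∈ T) : dyadI d (j + 1) ⊆ A :=
    hA ▸ dyadI_subset_biUnion hj
  have hswap (j : Fin (2 ^ d)) (hj : j ∈ T) :
      volume (B ∩ dyadI d (j + 1)) = volume (B ∩ dyadI d (k + 1)) :=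
    volume_inter_dyadI_eq_of_preimage_dyadSwap (hinv _ (isDyadicPerm_dyadSwap k j)
      fun t ht => dyadSwap_of_not_mem (fun h => ht (hsubA hk h)) (fun h => ht (hsubA hj h)))
  rw [hA]
  refine mul_measure_biUnion_eq (I := fun j : Fin (2 ^ d) => dyadI d (j + 1))
    (fun i _ j _ hij => pairwise_disjoint_dyadI d fun h => hij ?_)
    (fun j _ => measurableSet_dyadI _ _) hB (hA ▸ hBA) (fun j _ => volume_dyadI _ _) hswap
  exact Fin.ext (Nat.add_right_cancel h)

lemma volume_inter_closedBall_le {B I : Set ℝ} {x r : ℝ} (hr : 0 ≤ r) (hI : MeasurableSet I)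
    (hIx : I ⊆ closedBall x r) (hIr : volume I = ENNReal.ofReal r) :
    volume (B ∩ closedBall x r) ≤ ENNReal.ofReal r + volume (B ∩ I) := by
  have hdiff : volume (closedBall x r \ I) = ENNReal.ofReal r := by
    rw [measure_sdiff hIx hI.nullMeasurableSet (by simp [hIr]), Real.volume_closedBall, hIr,
      ← ENNReal.ofReal_sub _ hr]
    ring_nf
  calc volume (B ∩ closedBall x r) ≤ volume ((closedBall x r \ I) ∪ (B ∩ I)) :=
        measure_mono fun t ht => by by_cases h : t ∈ I <;> simp_all
    _ ≤ ENNReal.ofReal r + volume (B ∩ I) := hdiff ▸ measure_union_le _ _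

lemma volume_inter_closedBall_div_le {d : ℕ} {T : Finset (Fin (2 ^ d))} {A B : Set ℝ}
    (hA : A = ⋃ k ∈ T, dyadI d (k + 1)) (hBA : B ⊆ A) (hB : MeasurableSet B)
    (hinv : ∀ g : ℝ → ℝ, IsDyadicPerm g → (∀ t ∉ A, g t = t) → g ⁻¹' B = B)
    (hA0 : volume A ≠ 0) (hAtop : volume A ≠ ∞) {x : ℝ} (hx : x ∈ A) :
    volume (B ∩ closedBall x (2 ^ d)⁻¹) / volume (closedBall x (2 ^ d)⁻¹)
      ≤ (1 + volume B / volume A) / 2 := by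
  obtain ⟨k, hk, hxk⟩ := mem_iUnion₂.1 (hA ▸ hx)
  set v := ENNReal.ofReal (2 ^ d)⁻¹
  have hv0 : v ≠ 0 := by simp [v]
  have hm : volume (B ∩ dyadI d (k + 1)) = volume B / volume A * v := by
    rw [div_eq_mul_inv, mul_right_comm, ← div_eq_mul_inv, ENNReal.eq_div_iff hA0 hAtop, mul_comm,
      volume_inter_dyadI_mul_volume hA hBA hB hinv hk]
  have hball : volume (closedBall x (2 ^ d)⁻¹) = 2 * v := by
    rw [Real.volume_closedBall, ENNReal.ofReal_mul zero_le_two, ENNReal.ofReal_ofNat]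
  calc volume (B ∩ closedBall x (2 ^ d)⁻¹) / volume (closedBall x (2 ^ d)⁻¹)
      ≤ (v + volume B / volume A * v) / (2 * v) := by
        rw [hball, ← hm]
        gcongr
        exact volume_inter_closedBall_le (by positivity) (measurableSet_dyadI _ _)
          (dyadI_subset_closedBall hxk) (volume_dyadI _ _)
    _ = (1 + volume B / volume A) / 2 := by
        rw [← one_add_mul, ENNReal.mul_div_mul_right _ _ hv0 ENNReal.ofReal_ne_top]

theorem stmt13_general (N₀ : ℕ) (s : Finset (Fin (2 ^ N₀)))
    (A : Set ℝ) (hA : A = ⋃ k ∈ s, dyadI N₀ ((k : ℕ) + 1))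
    (B : Set ℝ) (hBA : B ⊆ A) (hB : MeasurableSet B)
    (hinv : ∀ g : ℝ → ℝ, IsDyadicPerm g → (∀ t ∉ A, g t = t) → g ⁻¹' B = B) :
    volume B = 0 ∨ volume (A \ B) = 0 := by
  by_contra! h
  obtain ⟨hB0, hAB0⟩ := h
  have hA0 : volume A ≠ 0 := fun h => hB0 (measure_mono_null hBA h)
  have hAtop : volume A ≠ ∞ :=
    ne_top_of_le_ne_top (by simp) (measure_mono (hA ▸ biUnion_dyadI_subset_Ioc s))
  have hratio : volume B / volume A < 1 := by
    rw [measure_sdiff hBA hB.nullMeasurableSet (ne_top_of_le_ne_top hAtop (measure_mono hBA)),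
      ne_eq, tsub_eq_zero_iff_le, not_le] at hAB0
    rwa [ENNReal.div_lt_iff (.inl hA0) (.inl hAtop), one_mul]
  obtain ⟨x, hxB, hx⟩ := Measure.exists_mem_of_measure_ne_zero_of_ae hB0
    (Besicovitch.ae_tendsto_measure_inter_div volume B)
  have hradius : Tendsto (fun d : ℕ => ((2 : ℝ) ^ d)⁻¹) atTop (𝓝[>] 0) := by
    simpa only [inv_pow] using tendsto_pow_atTop_nhdsWithin_zero_of_lt_one (r := (2 : ℝ)⁻¹)
      (by norm_num) (by norm_num)
  have hdensity : 1 ≤ (1 + volume B / volume A) / 2 :=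
    le_of_tendsto (hx.comp hradius) (eventually_atTop.2 ⟨N₀, fun d hd => by
      obtain ⟨T, hAT⟩ := exists_finset_eq_biUnion_dyadI hd hA
      exact volume_inter_closedBall_div_le hAT hBA hB hinv hA0 hAtop (hBA hxB)⟩)
  have hbound : (1 + volume B / volume A) / 2 < 1 := by
    rw [ENNReal.div_lt_iff (.inl two_ne_zero) (.inl ENNReal.ofNat_ne_top), one_mul,
      ← one_add_one_eq_two]
    exact ENNReal.add_lt_add_left ENNReal.one_ne_top hratio
  exact hbound.not_ge hdensity

/-- if `A` is a nonempty union of level-`N₀` dyadic intervals and `B ⊆ A`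
is Borel with `g ⁻¹' B = B` for every dyadic permutation `g` that is the identity off `A`,
then `λ B = 0` or `λ (A \ B) = 0`. -/
theorem stmt13 (N₀ : ℕ) (s : Finset (Fin (2 ^ N₀))) (hs : s.Nonempty)
    (A : Set ℝ) (hA : A = ⋃ k ∈ s, dyadI N₀ ((k : ℕ) + 1))
    (B : Set ℝ) (hBA : B ⊆ A) (hB : MeasurableSet B)
    (hinv : ∀ g : ℝ → ℝ, IsDyadicPerm g → (∀ t ∉ A, g t = t) → g ⁻¹' B = B) :
    volume B = 0 ∨ volume (A \ B) = 0 :=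
  stmt13_general N₀ s A hA B hBA hB hinv
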